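/- arXiv:0811.2871 — 4 statements merged into one kernel-verified Lean document; each statement's English description precedes it below -/
import Mathlib

section
/- Let y ∈ L¹([0,a]) and α ≥ 1. Then I^α y is absolutely continuous on [0,a]. -/
/-!
For `α = 1`, `I^α y` is the indefinite integral of `y`. For `α > 1`, Fubini on the triangle
`0 < x < u ≤ t`, with `∫ u in x..t, (u - x) ^ (α - 2) = (t - x) ^ (α - 1) / (α - 1)` and
`Γ(α) = (α - 1) Γ(α - 1)`, gives `I^α y t = ∫ u in 0..t, I^(α-1) y u`, where `I^(α-1) y` is
integrable on `[0, a]` by Tonelli. In both cases `I^α y` is the indefinite integral of an `L¹`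
function, hence absolutely continuous.
-/

open MeasureTheory Set

/-- Riemann–Liouville fractional integral of order `α`. -/
noncomputable def fracInt (α : ℝ) (y : ℝ → ℝ) (t : ℝ) : ℝ :=
  (1 / Real.Gamma α) * ∫ x in (0:ℝ)..t, (t - x) ^ (α - 1) * y x

/-- Absolute continuity of a function on `[A,B]` in the standard ε–δ sense. -/
def AbsolutelyContinuousOnI (f : ℝ → ℝ) (A B : ℝ) : Prop :=
  ∀ ε > (0:ℝ), ∃ δ > (0:ℝ), ∀ (n : ℕ) (s t : Fin n → ℝ),
    (∀ i, A ≤ s i ∧ s i ≤ t i ∧ t i ≤ B) →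
    (∀ i j, i ≠ j → Disjoint (Set.Ioo (s i) (t i)) (Set.Ioo (s j) (t j))) →
    (∑ i, (t i - s i)) < δ → (∑ i, |f (t i) - f (s i)|) < ε

lemma intervalIntegrable_sub_rpow {r : ℝ} (hr : -1 < r) (x b : ℝ) :
    IntervalIntegrable (fun u => (u - x) ^ r) volume x b := by
  simpa using
    (intervalIntegral.intervalIntegrable_rpow' (a := 0) (b := b - x) hr).comp_sub_right x

lemma integral_sub_rpow {r : ℝ} (hr : -1 < r) (x b : ℝ) :
    ∫ u in x..b, (u - x) ^ r = (b - x) ^ (r + 1) / (r + 1) := by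
  rw [intervalIntegral.integral_comp_sub_right (fun v => v ^ r) x, sub_self,
    integral_rpow (Or.inl hr), Real.zero_rpow (by linarith), sub_zero]

-- Extended by zero off the triangle `x < u`, so that iterated integrals over the triangle become
-- integrals over a square, where Fubini applies.
noncomputable def rpowKernel (r : ℝ) (y : ℝ → ℝ) : ℝ × ℝ → ℝ :=
  {p | p.2 < p.1}.indicator fun p => (p.1 - p.2) ^ r * y p.2

lemma Ioi_inter_Ioc_of_mem {a b x : ℝ} (hx : x ∈ Ioc a b) : Ioi x ∩ Ioc a b = Ioc x b := by
  ext u; simp only [mem_inter_iff, mem_Ioi, mem_Ioc] at hx ⊢; grind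

section rpowKernel

variable {r a b : ℝ} {y : ℝ → ℝ}

lemma rpowKernel_fun_fst (y : ℝ → ℝ) (r x : ℝ) :
    (fun u => rpowKernel r y (u, x)) = (Ioi x).indicator fun u => (u - x) ^ r * y x := by
  ext u; simp [rpowKernel, indicator_apply]

lemma rpowKernel_fun_snd (y : ℝ → ℝ) (r u : ℝ) :
    (fun x => rpowKernel r y (u, x)) = (Iio u).indicator fun x => (u - x) ^ r * y x := by
  ext x; simp [rpowKernel, indicator_apply]

lemma norm_rpowKernel (y : ℝ → ℝ) (r : ℝ) (p : ℝ × ℝ) :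
    ‖rpowKernel r y p‖ = rpowKernel r (fun x => |y x|) p := by
  by_cases h : p.2 < p.1
  · simp [rpowKernel, h, abs_of_nonneg (Real.rpow_nonneg (sub_nonneg.2 h.le) r)]
  · simp [rpowKernel, h]

lemma integral_rpowKernel_fst (hr : -1 < r) (y : ℝ → ℝ) {x : ℝ} (hx : x ∈ Ioc a b) :
    ∫ u in Ioc a b, rpowKernel r y (u, x) = (b - x) ^ (r + 1) / (r + 1) * y x := by
  rw [rpowKernel_fun_fst, integral_indicator measurableSet_Ioi,
    Measure.restrict_restrict measurableSet_Ioi, Ioi_inter_Ioc_of_mem hx,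
    ← intervalIntegral.integral_of_le hx.2, intervalIntegral.integral_mul_const,
    integral_sub_rpow hr]

lemma integral_rpowKernel_snd (y : ℝ → ℝ) {u : ℝ} (hu : u ∈ Ioc a b) :
    ∫ x in Ioc a b, rpowKernel r y (u, x) = ∫ x in a..u, (u - x) ^ r * y x := by
  have hset : Iio u ∩ Ioc a b = Ioo a u := by
    ext x; simp only [mem_inter_iff, mem_Iio, mem_Ioc, mem_Ioo] at hu ⊢; grind
  rw [rpowKernel_fun_snd, integral_indicator measurableSet_Iio,
    Measure.restrict_restrict measurableSet_Iio, hset, intervalIntegral.integral_of_le hu.1.le,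
    integral_Ioc_eq_integral_Ioo]

lemma integrable_rpowKernel (hr : -1 < r) (hy : IntegrableOn y (Ioc a b)) :
    Integrable (rpowKernel r y) ((volume.restrict (Ioc a b)).prod (volume.restrict (Ioc a b))) := by
  have hmeas : AEStronglyMeasurable (rpowKernel r y)
      ((volume.restrict (Ioc a b)).prod (volume.restrict (Ioc a b))) :=
    (((measurable_fst.sub measurable_snd).pow_const r).aestronglyMeasurable.mul
      hy.aestronglyMeasurable.comp_snd).indicator (measurableSet_lt measurable_snd measurable_fst)
  refine (integrable_prod_iff' hmeas).2 ⟨?_, ?_⟩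
  · filter_upwards [ae_restrict_mem measurableSet_Ioc] with x hx
    rw [rpowKernel_fun_fst, integrable_indicator_iff measurableSet_Ioi, IntegrableOn,
      Measure.restrict_restrict measurableSet_Ioi, Ioi_inter_Ioc_of_mem hx]
    exact (intervalIntegrable_sub_rpow hr x b).1.mul_const (y x)
  · have hcont : ContinuousOn (fun x => (b - x) ^ (r + 1) / (r + 1)) (Icc a b) :=
      ((Real.continuous_rpow_const (by linarith)).comp (continuous_sub_left b)).div_const _
        |>.continuousOn
    have hy' : IntegrableOn (fun x => |y x|) (Icc a b) :=
      (integrableOn_Icc_iff_integrableOn_Ioc).2 hy.abs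
    refine ((hy'.continuousOn_mul hcont isCompact_Icc).mono_set Ioc_subset_Icc_self).congr ?_
    filter_upwards [ae_restrict_mem measurableSet_Ioc] with x hx
    simp only [norm_rpowKernel, integral_rpowKernel_fst hr _ hx]

lemma intervalIntegrable_integral_rpow_mul (hr : -1 < r) (hab : a ≤ b)
    (hy : IntegrableOn y (Ioc a b)) :
    IntervalIntegrable (fun u => ∫ x in a..u, (u - x) ^ r * y x) volume a b := by
  rw [intervalIntegrable_iff_integrableOn_Ioc_of_le hab]
  refine (integrable_rpowKernel hr hy).integral_prod_left.congr ?_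
  filter_upwards [ae_restrict_mem measurableSet_Ioc] with u hu
  exact integral_rpowKernel_snd y hu

lemma integral_integral_rpow_mul (hr : -1 < r) (hab : a ≤ b) (hy : IntegrableOn y (Ioc a b)) :
    ∫ u in a..b, ∫ x in a..u, (u - x) ^ r * y x =
      ∫ x in a..b, (b - x) ^ (r + 1) / (r + 1) * y x := by
  rw [intervalIntegral.integral_of_le hab, intervalIntegral.integral_of_le hab]
  calc ∫ u in Ioc a b, ∫ x in a..u, (u - x) ^ r * y x
      = ∫ u in Ioc a b, ∫ x in Ioc a b, rpowKernel r y (u, x) :=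
        setIntegral_congr_fun measurableSet_Ioc fun u hu => (integral_rpowKernel_snd y hu).symm
    _ = ∫ x in Ioc a b, ∫ u in Ioc a b, rpowKernel r y (u, x) :=
        integral_integral_swap (f := fun u x => rpowKernel r y (u, x))
          (integrable_rpowKernel hr hy)
    _ = ∫ x in Ioc a b, (b - x) ^ (r + 1) / (r + 1) * y x :=
        setIntegral_congr_fun measurableSet_Ioc fun x hx => integral_rpowKernel_fst hr y hx

end rpowKernel

lemma fracInt_one (y : ℝ → ℝ) : fracInt 1 y = fun t => ∫ x in (0:ℝ)..t, y x := by
  ext t; simp [fracInt]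

lemma intervalIntegrable_fracInt {β a : ℝ} {y : ℝ → ℝ} (hβ : 0 < β) (ha : 0 ≤ a)
    (hy : IntegrableOn y (Ioc 0 a)) : IntervalIntegrable (fracInt β y) volume 0 a :=
  (intervalIntegrable_integral_rpow_mul (by linarith) ha hy).const_mul _

lemma integral_fracInt {β t : ℝ} {y : ℝ → ℝ} (hβ : 0 < β) (ht : 0 ≤ t)
    (hy : IntegrableOn y (Ioc 0 t)) :
    ∫ u in (0:ℝ)..t, fracInt β y u = fracInt (β + 1) y t := by
  have hΓ : Real.Gamma (β + 1) = β * Real.Gamma β := Real.Gamma_add_one hβ.ne'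
  unfold fracInt
  rw [intervalIntegral.integral_const_mul, integral_integral_rpow_mul (by linarith) ht hy,
    sub_add_cancel, add_sub_cancel_right, hΓ, ← intervalIntegral.integral_const_mul,
    ← intervalIntegral.integral_const_mul]
  congr 1 with x
  field_simp

theorem AbsolutelyContinuousOnInterval.absolutelyContinuousOnI {f : ℝ → ℝ} {A B : ℝ}
    (hf : AbsolutelyContinuousOnInterval f A B) : AbsolutelyContinuousOnI f A B := by
  intro ε hε
  obtain ⟨δ, hδ, hf⟩ := (absolutelyContinuousOnInterval_iff f A B).1 hf ε hε
  refine ⟨δ, hδ, fun n s t hst hdisj hsum => ?_⟩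
  let I : ℕ → ℝ × ℝ := fun i => if h : i < n then (s ⟨i, h⟩, t ⟨i, h⟩) else (0, 0)
  have hI : ∀ i : Fin n, I i = (s i, t i) := fun i => dif_pos i.isLt
  have hdist : ∀ g : ℝ → ℝ, ∑ i ∈ Finset.range n, dist (g (I i).1) (g (I i).2) =
      ∑ i, |g (t i) - g (s i)| := by
    intro g
    rw [← Fin.sum_univ_eq_sum_range (fun i => dist (g (I i).1) (g (I i).2))]
    simp only [hI, Real.dist_eq, abs_sub_comm]
  have hmem : (n, I) ∈ AbsolutelyContinuousOnInterval.disjWithin A B := by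
    constructor
    · intro i hi
      let k : Fin n := ⟨i, Finset.mem_range.1 hi⟩
      obtain ⟨h1, h2, h3⟩ := hst k
      change (I k).1 ∈ _ ∧ (I k).2 ∈ _
      rw [hI k]
      exact ⟨Icc_subset_uIcc ⟨h1, h2.trans h3⟩, Icc_subset_uIcc ⟨h1.trans h2, h3⟩⟩
    · intro i hi j hj hij
      let k : Fin n := ⟨i, Finset.mem_range.1 hi⟩
      let l : Fin n := ⟨j, Finset.mem_range.1 hj⟩
      change Disjoint (uIoc (I k).1 (I k).2) (uIoc (I l).1 (I l).2)
      rw [hI k, hI l, uIoc_of_le (hst k).2.1, uIoc_of_le (hst l).2.1, Ioc_disjoint_Ioc,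
        ← Ioo_disjoint_Ioo]
      exact hdisj k l (by simpa [k, l, Fin.ext_iff] using hij)
  rw [← hdist]
  refine hf (n, I) hmem ?_
  change ∑ i ∈ Finset.range n, dist (id (I i).1) (id (I i).2) < δ
  rw [hdist id]
  simpa [abs_of_nonneg, sub_nonneg, (hst _).2.1] using hsum

theorem AbsolutelyContinuousOnI.congr {f g : ℝ → ℝ} {A B : ℝ}
    (hf : AbsolutelyContinuousOnI f A B) (hfg : EqOn f g (Icc A B)) :
    AbsolutelyContinuousOnI g A B := by
  intro ε hε
  obtain ⟨δ, hδ, hf⟩ := hf ε hε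
  refine ⟨δ, hδ, fun n s t hst hdisj hsum => ?_⟩
  convert hf n s t hst hdisj hsum using 3 with i
  obtain ⟨hs, hst, ht⟩ := hst i
  rw [hfg ⟨hs, hst.trans ht⟩, hfg ⟨hs.trans hst, ht⟩]

/-- for `y ∈ L¹([0,a])` and `α ≥ 1`, `I^α y` is absolutely
continuous on `[0,a]`. -/
theorem fracInt_absolutelyContinuous
    (a : ℝ) (ha : 0 < a) (y : ℝ → ℝ)
    (hy : IntegrableOn y (Set.Icc 0 a) volume)
    (α : ℝ) (hα : 1 ≤ α) :
    AbsolutelyContinuousOnI (fracInt α y) 0 a := by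
  have hy' (t : ℝ) (ht : t ≤ a) : IntegrableOn y (Ioc 0 t) :=
    hy.mono_set (Ioc_subset_Icc_self.trans (Icc_subset_Icc_right ht))
  obtain ⟨g, hg, hfg⟩ : ∃ g, IntervalIntegrable g volume 0 a ∧
      EqOn (fun t => ∫ x in (0:ℝ)..t, g x) (fracInt α y) (Icc 0 a) := by
    rcases hα.eq_or_lt with rfl | hα
    · exact ⟨y, (intervalIntegrable_iff_integrableOn_Ioc_of_le ha.le).2 (hy' a le_rfl),
        fun t _ => by rw [fracInt_one]⟩
    · refine ⟨fracInt (α - 1) y, intervalIntegrable_fracInt (by linarith) ha.le (hy' a le_rfl),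
        fun t ht => ?_⟩
      simpa using integral_fracInt (sub_pos.2 hα) ht.1 (hy' t ht.2)
  exact (hg.absolutelyContinuousOnInterval_intervalIntegral left_mem_uIcc)
    |>.absolutelyContinuousOnI.congr hfg
end

section
/- Let a₀,...,a_k be nonzero reals and γ₀ > ... > γ_k reals, F(s) = Σᵢ aᵢ s^{γᵢ}. If F has no zeros in {Re s > 0}, then the set of zeros of F in the closed right half plane minus the origin is a finite subset of the imaginary axis contained in {iy : r ≤ |y| ≤ R} for some 0 < r < R. -/
/-!
Off the origin each term `aᵢ s^γᵢ` has modulus `|aᵢ| ‖s‖^γᵢ`, so for large `‖s‖` the term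
of largest exponent dominates the others and for small `‖s‖` the term of smallest exponent
does; hence `F` has no zeros outside an annulus `r ≤ ‖s‖ ≤ R`. Having no zeros in `Re s > 0`,
its zeros in the closed half-plane lie on the compact set `{iy : r ≤ |y| ≤ R}`, inside the
slit plane where `F` is holomorphic. There `F` does not vanish identically near any point
(it is nonzero just to the right of it), so its zeros are isolated and only finitely many fit.
-/

open Complex Finset Filter Topology

noncomputable def rpowSum {ι : Type*} [Fintype ι] (a γ : ι → ℝ) (s : ℂ) : ℂ :=
  ∑ i, (a i : ℂ) * s ^ (γ i : ℂ)

theorem Finset.sum_ne_zero_of_sum_erase_norm_lt {ι E : Type*} [NormedAddCommGroup E]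
    [DecidableEq ι] {s : Finset ι} {f : ι → E} {j : ι} (hj : j ∈ s)
    (h : ∑ i ∈ s.erase j, ‖f i‖ < ‖f j‖) : ∑ i ∈ s, f i ≠ 0 := by
  intro h0
  rw [← add_sum_erase s f hj, add_eq_zero_iff_eq_neg] at h0
  refine h.not_ge ?_
  calc ‖f j‖ = ‖∑ i ∈ s.erase j, f i‖ := by rw [h0, norm_neg]
    _ ≤ ∑ i ∈ s.erase j, ‖f i‖ := norm_sum_le _ _

theorem norm_ofReal_mul_cpow_ofReal (b g : ℝ) {s : ℂ} (hs : s ≠ 0) :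
    ‖(b : ℂ) * s ^ (g : ℂ)‖ = |b| * ‖s‖ ^ g := by
  simp [norm_cpow_of_ne_zero hs]

theorem eventually_sum_erase_mul_rpow_lt {ι : Type*} [Fintype ι] [DecidableEq ι]
    {c γ : ι → ℝ} {j : ι} {l : Filter ℝ} (hl : ∀ᶠ t in l, 0 < t) (hc : 0 < c j)
    (hlim : ∀ i ≠ j, Tendsto (fun t => t ^ (γ i - γ j)) l (𝓝 0)) :
    ∀ᶠ t in l, ∑ i ∈ univ.erase j, c i * t ^ γ i < c j * t ^ γ j := by
  have hratio : Tendsto (fun t => ∑ i ∈ univ.erase j, c i * t ^ (γ i - γ j)) l (𝓝 0) := by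
    simpa only [mul_zero, sum_const_zero] using
      tendsto_finsetSum _ fun i hi => (hlim i (ne_of_mem_erase hi)).const_mul (c i)
  filter_upwards [hratio.eventually_lt_const hc, hl] with t hlt ht
  calc ∑ i ∈ univ.erase j, c i * t ^ γ i
      = (∑ i ∈ univ.erase j, c i * t ^ (γ i - γ j)) * t ^ γ j := by
        rw [sum_mul]
        refine sum_congr rfl fun i _ => ?_
        rw [mul_assoc, ← Real.rpow_add ht, sub_add_cancel]
    _ < c j * t ^ γ j := mul_lt_mul_of_pos_right hlt (Real.rpow_pos_of_pos ht _)

theorem eventually_rpowSum_ne_zero {ι : Type*} [Fintype ι] [DecidableEq ι]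
    {a γ : ι → ℝ} {j : ι} {l : Filter ℝ} (hl : ∀ᶠ t in l, 0 < t) (ha : a j ≠ 0)
    (hlim : ∀ i ≠ j, Tendsto (fun t => t ^ (γ i - γ j)) l (𝓝 0)) :
    ∀ᶠ t in l, ∀ s : ℂ, ‖s‖ = t → rpowSum a γ s ≠ 0 := by
  filter_upwards [eventually_sum_erase_mul_rpow_lt (c := fun i => |a i|) hl (abs_pos.2 ha) hlim, hl]
    with t hdom ht s hst
  have hs : s ≠ 0 := norm_pos_iff.1 (hst ▸ ht)
  refine sum_ne_zero_of_sum_erase_norm_lt (mem_univ j) ?_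
  simpa only [norm_ofReal_mul_cpow_ofReal _ _ hs, hst] using hdom

theorem tendsto_rpow_nhdsGT_zero {e : ℝ} (he : 0 < e) :
    Tendsto (fun t : ℝ => t ^ e) (𝓝[>] 0) (𝓝 0) := by
  simpa [Real.zero_rpow he.ne'] using
    (Real.continuousAt_rpow_const 0 e (Or.inr he.le)).tendsto.mono_left nhdsWithin_le_nhds

theorem exists_norm_mem_Icc_of_rpowSum_eq_zero {k : ℕ} {a γ : Fin (k + 1) → ℝ}
    (h0 : a 0 ≠ 0) (hlast : a (Fin.last k) ≠ 0) (hγ : StrictAnti γ) :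
    ∃ r R : ℝ, 0 < r ∧ r < R ∧
      ∀ s : ℂ, s ≠ 0 → rpowSum a γ s = 0 → r ≤ ‖s‖ ∧ ‖s‖ ≤ R := by
  have hlarge := eventually_rpowSum_ne_zero (eventually_gt_atTop 0) h0 fun i hi => by
    simpa using tendsto_rpow_neg_atTop (sub_pos.2 (hγ (Fin.pos_of_ne_zero hi)))
  have hsmall := eventually_rpowSum_ne_zero self_mem_nhdsWithin hlast fun i hi =>
    tendsto_rpow_nhdsGT_zero (sub_pos.2 (hγ (Fin.lt_last_iff_ne_last.2 hi)))
  obtain ⟨R, hR⟩ := eventually_atTop.1 hlarge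
  obtain ⟨r, hr, hIoo⟩ := mem_nhdsGT_iff_exists_Ioo_subset.1 hsmall
  refine ⟨r, max R (r + 1), hr, by simp, fun s hs hFs => ⟨?_, ?_⟩⟩
  · by_contra! hlt
    exact hIoo ⟨norm_pos_iff.2 hs, hlt⟩ s rfl hFs
  · by_contra! hlt
    exact hR ‖s‖ (le_max_left _ _ |>.trans hlt.le) s rfl hFs

theorem analyticAt_rpowSum {ι : Type*} [Fintype ι] (a γ : ι → ℝ) {z : ℂ}
    (hz : z ∈ slitPlane) : AnalyticAt ℂ (rpowSum a γ) z :=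
  analyticAt_fun_sum _ fun _ _ => analyticAt_const.mul (analyticAt_id.cpow analyticAt_const hz)

theorem frequently_ne_zero_of_forall_re_pos {f : ℂ → ℂ} (hf : ∀ s, 0 < s.re → f s ≠ 0)
    {z : ℂ} (hz : 0 ≤ z.re) : ∃ᶠ w in 𝓝 z, f w ≠ 0 := by
  have hshift : Tendsto (fun t : ℝ => z + t) (𝓝[>] 0) (𝓝 z) := by
    simpa using ((continuous_ofReal.tendsto 0).const_add z).mono_left nhdsWithin_le_nhds
  refine hshift.frequently (Eventually.frequently ?_)
  filter_upwards [self_mem_nhdsWithin] with t (ht : 0 < t)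
  exact hf _ (by simpa using add_pos_of_nonneg_of_pos hz ht)

theorem IsCompact.finite_zeros_of_frequently_ne_zero {𝕜 E : Type*} [NontriviallyNormedField 𝕜]
    [NormedAddCommGroup E] [NormedSpace 𝕜 E] {f : 𝕜 → E} {K : Set 𝕜} (hK : IsCompact K)
    (hf : ∀ z ∈ K, AnalyticAt 𝕜 f z) (hne : ∀ z ∈ K, ∃ᶠ w in 𝓝 z, f w ≠ 0) :
    {z ∈ K | f z = 0}.Finite := by
  by_contra hinf
  obtain ⟨z, hzK, hacc⟩ := Set.Infinite.exists_accPt_of_subset_isCompact hinf hK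
    (Set.sep_subset _ _)
  rcases (hf z hzK).eventually_eq_zero_or_eventually_ne_zero with hzero | hisolated
  · obtain ⟨w, hw, hw'⟩ := ((hne z hzK).and_eventually hzero).exists
    exact hw hw'
  · obtain ⟨w, hw, hw'⟩ :=
      ((accPt_iff_frequently_nhdsNE.1 hacc).and_eventually hisolated).exists
    exact hw' hw.2

/-- if `F(s) = Σᵢ aᵢ s^{γᵢ}` has no zeros in the open right
half-plane, then its zero set in the closed right half-plane minus the origin
is a finite subset of the imaginary axis contained in an annulus
`{iy : r ≤ |y| ≤ R}` for some `0 < r < R`. -/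
theorem F_zero_set_finite (k : ℕ) (a : Fin (k+1) → ℝ) (γ : Fin (k+1) → ℝ)
    (ha : ∀ i, a i ≠ 0) (hγ : StrictAnti γ)
    (hF : ∀ s : ℂ, 0 < s.re →
      (∑ i : Fin (k+1), (a i : ℂ) * s ^ (γ i : ℂ)) ≠ 0) :
    ∃ r R : ℝ, 0 < r ∧ r < R ∧
      Set.Finite {s : ℂ | 0 ≤ s.re ∧ s ≠ 0 ∧
        (∑ i : Fin (k+1), (a i : ℂ) * s ^ (γ i : ℂ)) = 0} ∧
      {s : ℂ | 0 ≤ s.re ∧ s ≠ 0 ∧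
        (∑ i : Fin (k+1), (a i : ℂ) * s ^ (γ i : ℂ)) = 0} ⊆
        {s : ℂ | s.re = 0 ∧ r ≤ ‖s‖ ∧ ‖s‖ ≤ R} := by
  obtain ⟨r, R, hr, hrR, hnorm⟩ := exists_norm_mem_Icc_of_rpowSum_eq_zero (ha 0) (ha _) hγ
  set K : Set ℂ := {s | s.re = 0 ∧ r ≤ ‖s‖ ∧ ‖s‖ ≤ R}
  have hsub : {s : ℂ | 0 ≤ s.re ∧ s ≠ 0 ∧ rpowSum a γ s = 0} ⊆ K :=
    fun s ⟨hre, hs, hFs⟩ => ⟨le_antisymm (not_lt.1 fun h => hF s h hFs) hre, hnorm s hs hFs⟩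
  have hKcompact : IsCompact K :=
    (isCompact_closedBall (0 : ℂ) R).of_isClosed_subset
      ((isClosed_eq continuous_re continuous_const).inter
        ((isClosed_le continuous_const continuous_norm).inter
          (isClosed_le continuous_norm continuous_const)))
      fun s hs => mem_closedBall_zero_iff.2 hs.2.2
  have hKslit : K ⊆ slitPlane := fun s ⟨hre, hrs, _⟩ =>
    mem_slitPlane_iff.2 (Or.inr fun him => by
      simp [show s = 0 from Complex.ext hre him] at hrs; linarith)
  refine ⟨r, R, hr, hrR, ?_, hsub⟩
  refine (hKcompact.finite_zeros_of_frequently_ne_zero (f := rpowSum a γ)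
    (fun z hz => analyticAt_rpowSum a γ (hKslit hz))
    (fun z hz => frequently_ne_zero_of_forall_re_pos hF hz.1.ge)).subset ?_
  exact fun s hs => ⟨hsub hs, hs.2.2⟩
end

section
/- Let 0 ≤ c < d, φ continuous on [c,d] with d < 2, and y ∈ C([0,a]). Then the distributed-order fractional integral Jy(t) = ∫_c^d (φ(γ)/Γ(2-γ)) ∫₀ᵗ (t-x)^{1-γ} y(x) dx dγ defines a continuous function on [0,a]. -/
open MeasureTheory Set

/-- Distributed-order fractional integral
`Jy(t) = ∫_c^d (φ(γ)/Γ(2-γ)) ∫₀ᵗ (t-x)^{1-γ} y(x) dx dγ`. -/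
noncomputable def distJ (c d : ℝ) (φ y : ℝ → ℝ) (t : ℝ) : ℝ :=
  ∫ γ in c..d, (φ γ / Real.Gamma (2 - γ)) * ∫ x in (0:ℝ)..t, (t - x) ^ (1 - γ) * y x

/-- for `0 ≤ c < d < 2`, `φ` continuous on `[c,d]` and `y`
continuous on `[0,a]`, the distributed-order fractional integral `Jy` is
continuous on `[0,a]`. -/
theorem distJ_continuous
    (a c d : ℝ) (ha : 0 < a) (hc : 0 ≤ c) (hcd : c < d) (hd : d < 2)
    (φ : ℝ → ℝ) (hφ : ContinuousOn φ (Set.Icc c d))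
    (y : ℝ → ℝ) (hy : ContinuousOn y (Set.Icc 0 a)) :
    ContinuousOn (distJ c d φ y) (Set.Icc 0 a) := by
  have ha' : (0:ℝ) ≤ a := ha.le
  have hcd' : c ≤ d := hcd.le
  -- continuous extensions via projection onto the compact intervals
  set Y : ℝ → ℝ := fun x => y (Set.projIcc 0 a ha' x) with hYdef
  set Φ : ℝ → ℝ := fun γ => φ (Set.projIcc c d hcd' γ) with hΦdef
  have hYc : Continuous Y :=
    hy.comp_continuous (continuous_subtype_val.comp (continuous_projIcc))
      (fun x => (Set.projIcc 0 a ha' x).2)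
  have hΦc : Continuous Φ :=
    hφ.comp_continuous (continuous_subtype_val.comp (continuous_projIcc))
      (fun x => (Set.projIcc c d hcd' x).2)
  have hYeq : ∀ x ∈ Set.Icc (0:ℝ) a, Y x = y x := by
    intro x hx; simp [hYdef, Set.projIcc_of_mem ha' hx]
  have hΦeq : ∀ γ ∈ Set.Icc c d, Φ γ = φ γ := by
    intro γ hγ; simp [hΦdef, Set.projIcc_of_mem hcd' hγ]
  -- bound for Y
  obtain ⟨C₀, hC₀⟩ := isCompact_Icc.exists_bound_of_continuousOn hy
  set C : ℝ := max C₀ 0 with hCdef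
  have hC0 : 0 ≤ C := le_max_right _ _
  have hYb : ∀ x, |Y x| ≤ C := by
    intro x
    exact le_trans (hC₀ _ (Set.projIcc 0 a ha' x).2) (le_max_left _ _)
  set A : ℝ := (max a 1) ^ (2:ℝ) with hAdef
  have hA1 : (1:ℝ) ≤ max a 1 := le_max_right _ _
  have hA0 : 0 ≤ A := Real.rpow_nonneg (by linarith) _
  -- the inner kernel and integral
  set k : ℝ × ℝ → ℝ → ℝ :=
    fun p s => p.1 ^ (2 - p.2) * ((1 - s) ^ (1 - p.2) * Y (p.1 * s)) with hkdef
  set K : ℝ × ℝ → ℝ := fun p => ∫ s in (0:ℝ)..1, k p s with hKdef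
  set S : Set (ℝ × ℝ) := Set.Icc 0 a ×ˢ Set.Icc c d with hSdef
  have hae : ∀ᵐ s ∂(volume.restrict (Set.Ioc (0:ℝ) 1)), s ∈ Set.Ioo (0:ℝ) 1 := by
    have h1 : ∀ᵐ s : ℝ ∂volume, s ∉ ({1} : Set ℝ) :=
      (Set.countable_singleton (1:ℝ)).ae_notMem volume
    filter_upwards [ae_restrict_mem measurableSet_Ioc, ae_restrict_of_ae h1] with s hs hs1
    exact ⟨hs.1, lt_of_le_of_ne hs.2 (by simpa using hs1)⟩
  have hK : ContinuousOn K S := by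
    have hrw : K = fun p => ∫ s in Set.Ioc (0:ℝ) 1, k p s := by
      funext p; exact intervalIntegral.integral_of_le zero_le_one
    rw [hrw]
    apply MeasureTheory.continuousOn_of_dominated
      (bound := fun s => A * ((1 - s) ^ (1 - d) * C))
    · intro p hp
      refine Measurable.aestronglyMeasurable ?_
      exact measurable_const.mul
        (((measurable_const.sub measurable_id).pow measurable_const).mul
          (hYc.measurable.comp (measurable_const.mul measurable_id)))
    · intro p hp
      filter_upwards [hae] with s hs
      obtain ⟨hu, hv⟩ := hp
      have h1s : 0 < 1 - s := by linarith [hs.2]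
      have h1s' : 1 - s ≤ 1 := by linarith [hs.1]
      have hb1 : p.1 ^ (2 - p.2) ≤ A := by
        calc p.1 ^ (2 - p.2) ≤ (max a 1) ^ (2 - p.2) :=
              Real.rpow_le_rpow hu.1 (le_max_of_le_left hu.2) (by linarith [hv.2])
          _ ≤ A := Real.rpow_le_rpow_of_exponent_le hA1 (by linarith [hv.1])
      have hb2 : (1 - s) ^ (1 - p.2) ≤ (1 - s) ^ (1 - d) :=
        Real.rpow_le_rpow_of_exponent_ge h1s h1s' (by linarith [hv.2])
      have hrp1 : (0:ℝ) ≤ p.1 ^ (2 - p.2) := Real.rpow_nonneg hu.1 _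
      have hrp2 : (0:ℝ) ≤ (1 - s) ^ (1 - p.2) := Real.rpow_nonneg h1s.le _
      have : ‖k p s‖ = p.1 ^ (2 - p.2) * ((1 - s) ^ (1 - p.2) * |Y (p.1 * s)|) := by
        simp [hkdef, abs_mul, abs_of_nonneg hrp1, abs_of_nonneg hrp2]
      rw [this]
      exact mul_le_mul hb1 (mul_le_mul hb2 (hYb _) (abs_nonneg _)
        (Real.rpow_nonneg h1s.le _)) (mul_nonneg hrp2 (abs_nonneg _)) hA0
    · have hint : IntervalIntegrable (fun s : ℝ => (1 - s) ^ (1 - d)) volume 0 1 := by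
        have := (intervalIntegral.intervalIntegrable_rpow' (a := 0) (b := 1)
          (r := 1 - d) (by linarith)).comp_sub_left 1
        simpa using this.symm
      have := ((hint.mul_const C).const_mul A)
      exact (intervalIntegrable_iff_integrableOn_Ioc_of_le zero_le_one).mp this
    · filter_upwards [hae] with s hs
      have h1s : (0:ℝ) < 1 - s := by linarith [hs.2]
      have c1 : ContinuousOn (fun p : ℝ × ℝ => p.1 ^ (2 - p.2)) S := by
        intro p hp
        refine ContinuousAt.continuousWithinAt ?_
        have : ContinuousAt (fun q : ℝ × ℝ => ((q.1, 2 - q.2) : ℝ × ℝ)) p :=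
          (continuous_fst.prodMk (continuous_const.sub continuous_snd)).continuousAt
        exact ContinuousAt.comp
          (Real.continuousAt_rpow _ (Or.inr (by simp; linarith [hp.2.2]))) this
      have c2 : Continuous (fun p : ℝ × ℝ => (1 - s) ^ (1 - p.2)) := by
        rw [continuous_iff_continuousAt]
        intro p
        exact ContinuousAt.comp (Real.continuousAt_const_rpow h1s.ne')
          (continuous_const.sub continuous_snd).continuousAt
      have c3 : Continuous (fun p : ℝ × ℝ => Y (p.1 * s)) :=
        hYc.comp (continuous_fst.mul continuous_const)
      exact c1.mul ((c2.mul c3).continuousOn)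
  -- the Gamma factor
  have hΓpos : ∀ γ : ℝ, 0 < Real.Gamma (2 - (Set.projIcc c d hcd' γ : ℝ)) := by
    intro γ
    have := (Set.projIcc c d hcd' γ).2.2
    exact Real.Gamma_pos_of_pos (by linarith)
  have hΓc : Continuous (fun γ : ℝ => Real.Gamma (2 - (Set.projIcc c d hcd' γ : ℝ))) := by
    rw [continuous_iff_continuousAt]
    intro γ
    have hinner : ContinuousAt (fun γ : ℝ => 2 - (Set.projIcc c d hcd' γ : ℝ)) γ :=
      (continuous_const.sub (continuous_subtype_val.comp continuous_projIcc)).continuousAt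
    have hout : ContinuousAt Real.Gamma (2 - (Set.projIcc c d hcd' γ : ℝ)) := by
      refine (Real.differentiableAt_Gamma ?_).continuousAt
      intro m
      have h1 := (Set.projIcc c d hcd' γ).2.2
      have h2 : (0:ℝ) ≤ m := Nat.cast_nonneg m
      intro h; linarith
    exact ContinuousAt.comp (g := Real.Gamma) hout hinner
  -- the globally continuous version of distJ
  set G : ℝ → ℝ → ℝ := fun t γ =>
    (Φ γ / Real.Gamma (2 - (Set.projIcc c d hcd' γ : ℝ))) *
      K (Set.projIcc 0 a ha' t, Set.projIcc c d hcd' γ) with hGdef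
  have hGu : Continuous (Function.uncurry G) := by
    have h1 : Continuous (fun p : ℝ × ℝ =>
        Φ p.2 / Real.Gamma (2 - (Set.projIcc c d hcd' p.2 : ℝ))) :=
      (hΦc.comp continuous_snd).div (hΓc.comp continuous_snd)
        (fun p => (hΓpos p.2).ne')
    have h2 : Continuous (fun p : ℝ × ℝ =>
        K (Set.projIcc 0 a ha' p.1, Set.projIcc c d hcd' p.2)) := by
      apply hK.comp_continuous
      · exact ((continuous_subtype_val.comp continuous_projIcc).comp continuous_fst).prodMk
          ((continuous_subtype_val.comp continuous_projIcc).comp continuous_snd)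
      · intro p
        exact ⟨(Set.projIcc 0 a ha' p.1).2, (Set.projIcc c d hcd' p.2).2⟩
    exact h1.mul h2
  have hGcont : Continuous (fun t => ∫ γ in c..d, G t γ) :=
    intervalIntegral.continuous_parametric_intervalIntegral_of_continuous' hGu c d
  refine (hGcont.continuousOn).congr ?_
  intro t ht
  show distJ c d φ y t = ∫ γ in c..d, G t γ
  rw [distJ]
  refine intervalIntegral.integral_congr ?_
  intro γ hγ
  rw [Set.uIcc_of_le hcd'] at hγ
  have hproj : Set.projIcc c d hcd' γ = ⟨γ, hγ⟩ := Set.projIcc_of_mem hcd' hγ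
  have hprojt : Set.projIcc 0 a ha' t = ⟨t, ht⟩ := Set.projIcc_of_mem ha' ht
  have hγd : γ ≤ d := hγ.2
  have hγc : c ≤ γ := hγ.1
  -- reduce to the inner integral identity
  have hinner : (∫ x in (0:ℝ)..t, (t - x) ^ (1 - γ) * y x) = K (t, γ) := by
    have hyY : (∫ x in (0:ℝ)..t, (t - x) ^ (1 - γ) * y x)
        = ∫ x in (0:ℝ)..t, (t - x) ^ (1 - γ) * Y x := by
      refine intervalIntegral.integral_congr ?_
      intro x hx
      rw [Set.uIcc_of_le ht.1] at hx
      simp only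
      rw [hYeq x ⟨hx.1, le_trans hx.2 ht.2⟩]
    rw [hyY, hKdef]
    rcases eq_or_lt_of_le ht.1 with h0 | h0
    · simp only [← h0]
      rw [intervalIntegral.integral_same]
      have : ((0:ℝ), γ).1 ^ (2 - ((0:ℝ), γ).2) = 0 :=
        Real.zero_rpow (by simp; linarith)
      simp [hkdef, Real.zero_rpow (show (2:ℝ) - γ ≠ 0 by linarith)]
    · -- t > 0 : change of variables x = t * s
      have key : ∀ s ∈ Set.uIcc (0:ℝ) 1,
          t ^ (2 - γ) * ((1 - s) ^ (1 - γ) * Y (t * s))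
            = t * ((t - t * s) ^ (1 - γ) * Y (t * s)) := by
        intro s hs
        rw [Set.uIcc_of_le zero_le_one] at hs
        have h1s : (0:ℝ) ≤ 1 - s := by linarith [hs.2]
        have hts : t - t * s = t * (1 - s) := by ring
        rw [hts, Real.mul_rpow h0.le h1s]
        have ht2 : t ^ (2 - γ) = t * t ^ (1 - γ) := by
          have : (2:ℝ) - γ = 1 + (1 - γ) := by ring
          rw [this, Real.rpow_add h0, Real.rpow_one]
        rw [ht2]; ring
      simp only [hkdef]
      have hsm := intervalIntegral.smul_integral_comp_mul_left
        (a := 0) (b := 1) (fun x => (t - x) ^ (1 - γ) * Y x) t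
      simp only [smul_eq_mul, mul_zero, mul_one] at hsm
      rw [intervalIntegral.integral_congr key, intervalIntegral.integral_const_mul]
      exact hsm.symm
  show φ γ / Real.Gamma (2 - γ) * (∫ x in (0:ℝ)..t, (t - x) ^ (1 - γ) * y x) = G t γ
  rw [hinner]
  simp only [hGdef, hproj, hprojt]
  rw [hΦeq γ hγ]
end

section
/- Let 0 ≤ c < d < 2, φ continuous on [c,d], and y ∈ C¹([0,a]) with y(0) = 0. Then Jy(t) = ∫_c^d φ(γ) I^{2-γ}y(t) dγ is continuously differentiable on [0,a] and (d/dt) Jy(t) = ∫_c^d φ(γ) I^{2-γ}y'(t) dγ. -/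
/-!
In convolution form `∫₀ᵗ (t-x)^r f(x) dx = ∫₀ᵗ s^r f(t-s) ds`, Fubini over the triangle
`0 ≤ s ≤ σ ≤ t` turns `∫₀ᵗ (∫₀^σ s^r y'(σ-s) ds) dσ` into `∫₀ᵗ s^r (y(t-s) - y(0)) ds`, so
`y(0) = 0` gives `∫₀ᵗ I^{2-γ} y' = I^{2-γ} y`. A second Fubini, in `(γ, σ)`, gives
`Jy(t) = ∫₀ᵗ Jy'(σ) dσ`, and the fundamental theorem of calculus applies once `Jy'` is
continuous. The second Fubini step and that continuity rest on the joint continuity of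
`(r, t) ↦ ∫₀ᵗ (t-x)^r f(x) dx` for continuous `f`, which follows by dominated convergence from
the rescaled form `t^{r+1} ∫₀¹ u^r f(t - t u) du`, whose singular factor no longer moves with `t`.
-/

open MeasureTheory Set

open intervalIntegral Topology

-- `rlIntegral r f t = Γ(r + 1) · I^{r+1} f(t)`.
noncomputable def rlIntegral (r : ℝ) (f : ℝ → ℝ) (t : ℝ) : ℝ :=
  ∫ x in (0:ℝ)..t, (t - x) ^ r * f x

lemma rlIntegral_congr {r t : ℝ} {f g : ℝ → ℝ} (ht : 0 ≤ t) (h : EqOn f g (Icc 0 t)) :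
    rlIntegral r f t = rlIntegral r g t :=
  integral_congr fun x hx => by rw [uIcc_of_le ht] at hx; simp only [h hx]

lemma rlIntegral_eq_integral_rpow_mul_comp_sub (r : ℝ) (f : ℝ → ℝ) (t : ℝ) :
    rlIntegral r f t = ∫ s in (0:ℝ)..t, s ^ r * f (t - s) := by
  simpa [rlIntegral] using integral_comp_sub_left (fun s => s ^ r * f (t - s)) t (a := 0) (b := t)

lemma rlIntegral_eq_rpow_mul_integral_unitInterval {r t : ℝ} (hr : -1 < r) (ht : 0 ≤ t)
    (f : ℝ → ℝ) :
    rlIntegral r f t = t ^ (r + 1) * ∫ u in (0:ℝ)..1, u ^ r * f (t - t * u) := by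
  rcases ht.eq_or_lt with rfl | ht
  · simp [rlIntegral, Real.zero_rpow (by linarith : r + 1 ≠ 0)]
  have hscale : ∫ u in (0:ℝ)..1, (t - (t - t * u)) ^ r * f (t - t * u)
      = t ^ r * ∫ u in (0:ℝ)..1, u ^ r * f (t - t * u) := by
    rw [← intervalIntegral.integral_const_mul]
    refine integral_congr fun u hu => ?_
    rw [uIcc_of_le zero_le_one] at hu
    simp only [sub_sub_cancel, Real.mul_rpow ht.le hu.1, mul_assoc]
  have hsub := integral_comp_sub_mul (fun x => (t - x) ^ r * f x) ht.ne' t (a := 0) (b := 1)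
  simp only [mul_one, mul_zero, sub_self, sub_zero, smul_eq_mul] at hsub
  rw [hscale] at hsub
  rw [rlIntegral, Real.rpow_add_one ht.ne', mul_comm (t ^ r) t, mul_assoc, hsub,
    ← mul_assoc, mul_inv_cancel₀ ht.ne', one_mul]

lemma continuousOn_rlIntegral {a : ℝ} {f : ℝ → ℝ} (hf : ContinuousOn f (Icc 0 a)) :
    ContinuousOn (fun p : ℝ × ℝ => rlIntegral p.1 f p.2) (Ioi (-1) ×ˢ Icc 0 a) := by
  set S := Ioi (-1 : ℝ) ×ˢ Icc 0 a
  have hmaps : ∀ p ∈ S, ∀ u ∈ Icc (0:ℝ) 1, p.2 - p.2 * u ∈ Icc 0 a := fun p hp u hu =>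
    ⟨by nlinarith [hp.2.1, hu.2], by nlinarith [hp.2.1, hp.2.2, hu.1]⟩
  have hunit : ContinuousOn (fun p : ℝ × ℝ => ∫ u in (0:ℝ)..1, u ^ p.1 * f (p.2 - p.2 * u)) S := by
    intro p₀ hp₀
    obtain ⟨M, hM⟩ := isCompact_Icc.exists_bound_of_continuousOn hf
    obtain ⟨ρ, hρ, hρp₀⟩ := exists_between (mem_Ioi.mp hp₀.1)
    have hρ_ev : ∀ᶠ p in 𝓝[S] p₀, ρ < p.1 :=
      nhdsWithin_le_nhds ((continuous_fst.tendsto p₀).eventually (lt_mem_nhds hρp₀))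
    apply continuousWithinAt_of_dominated_interval (bound := fun u => M * u ^ ρ)
    · filter_upwards [self_mem_nhdsWithin] with p hp
      rw [uIoc_of_le zero_le_one]
      refine ContinuousOn.aestronglyMeasurable ?_ measurableSet_Ioc
      exact (continuousOn_id.rpow_const fun u hu => Or.inl hu.1.ne').mul
        (hf.comp (by fun_prop) fun u hu => hmaps p hp u (Ioc_subset_Icc_self hu))
    · filter_upwards [self_mem_nhdsWithin, hρ_ev] with p hp hρp
      refine Filter.Eventually.of_forall fun u hu => ?_
      rw [uIoc_of_le zero_le_one] at hu
      rw [norm_mul, Real.norm_of_nonneg (Real.rpow_nonneg hu.1.le _), mul_comm]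
      exact mul_le_mul (hM _ (hmaps p hp u (Ioc_subset_Icc_self hu)))
        (Real.rpow_le_rpow_of_exponent_ge hu.1 hu.2 hρp.le) (Real.rpow_nonneg hu.1.le _)
        ((norm_nonneg _).trans (hM _ (hmaps p hp u (Ioc_subset_Icc_self hu))))
    · exact (intervalIntegrable_rpow' hρ).const_mul M
    · refine Filter.Eventually.of_forall fun u hu => ?_
      rw [uIoc_of_le zero_le_one] at hu
      exact (continuous_const.rpow continuous_fst fun _ => Or.inl hu.1.ne').continuousWithinAt.mul
        (hf.comp (by fun_prop) (fun p hp => hmaps p hp u (Ioc_subset_Icc_self hu)) p₀ hp₀)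
  have hpow : ContinuousOn (fun p : ℝ × ℝ => p.2 ^ (p.1 + 1)) S :=
    continuousOn_snd.rpow (continuousOn_fst.add continuousOn_const)
      fun p hp => Or.inr (by linarith [mem_Ioi.mp hp.1])
  refine (hpow.mul hunit).congr fun p hp => ?_
  exact rlIntegral_eq_rpow_mul_integral_unitInterval hp.1 hp.2.1 f

lemma intervalIntegral_triangle_swap {t : ℝ} (ht : 0 ≤ t) {f : ℝ → ℝ → ℝ}
    (hf : IntegrableOn (Function.uncurry f) (Ioc 0 t ×ˢ Ioc 0 t)) :
    ∫ σ in (0:ℝ)..t, ∫ s in (0:ℝ)..σ, f σ s = ∫ s in (0:ℝ)..t, ∫ σ in s..t, f σ s := by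
  set F : ℝ → ℝ → ℝ := fun σ s => {p : ℝ × ℝ | p.2 ≤ p.1}.indicator (Function.uncurry f) (σ, s)
  have hF : IntegrableOn (Function.uncurry F) (uIoc 0 t ×ˢ uIoc 0 t) := by
    rw [uIoc_of_le ht]
    exact hf.indicator (measurableSet_le measurable_snd measurable_fst)
  have hF_fst : ∀ σ ∈ Ioc 0 t, ∫ s in (0:ℝ)..t, F σ s = ∫ s in (0:ℝ)..σ, f σ s := by
    intro σ hσ
    have : F σ = (Iic σ).indicator (f σ) := by ext s; simp [F, indicator_apply]
    rw [integral_of_le ht, integral_of_le hσ.1.le, this, setIntegral_indicator measurableSet_Iic,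
      Ioc_inter_Iic, min_eq_right hσ.2]
  have hF_snd : ∀ s ∈ Ioc 0 t, ∫ σ in (0:ℝ)..t, F σ s = ∫ σ in s..t, f σ s := by
    intro s hs
    have : (fun σ => F σ s) = (Ici s).indicator (fun σ => f σ s) := by
      ext σ; simp [F, indicator_apply]
    have hIcc : Ioc 0 t ∩ Ici s = Icc s t := by
      ext σ
      simp only [mem_inter_iff, mem_Ioc, mem_Ici, mem_Icc]
      exact ⟨fun h => ⟨h.2, h.1.2⟩, fun h => ⟨⟨hs.1.trans_le h.1, h.2⟩, h.1⟩⟩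
    rw [integral_of_le ht, integral_of_le hs.2, this, setIntegral_indicator measurableSet_Ici,
      hIcc, integral_Icc_eq_integral_Ioc]
  calc ∫ σ in (0:ℝ)..t, ∫ s in (0:ℝ)..σ, f σ s
      = ∫ σ in (0:ℝ)..t, ∫ s in (0:ℝ)..t, F σ s :=
        integral_congr_ae (Filter.Eventually.of_forall fun σ hσ =>
          (hF_fst σ (by rwa [uIoc_of_le ht] at hσ)).symm)
    _ = ∫ s in (0:ℝ)..t, ∫ σ in (0:ℝ)..t, F σ s := intervalIntegral_intervalIntegral_swap hF
    _ = ∫ s in (0:ℝ)..t, ∫ σ in s..t, f σ s :=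
        integral_congr_ae (Filter.Eventually.of_forall fun s hs =>
          hF_snd s (by rwa [uIoc_of_le ht] at hs))

lemma integral_rlIntegral {r t : ℝ} (hr : -1 < r) (ht : 0 ≤ t) {g : ℝ → ℝ} (hg : Continuous g) :
    ∫ σ in (0:ℝ)..t, rlIntegral r g σ = rlIntegral r (fun x => ∫ v in (0:ℝ)..x, g v) t := by
  obtain ⟨M, hM⟩ := isCompact_Icc.exists_bound_of_continuousOn (hg.continuousOn (s := Icc (-t) t))
  have hint : IntegrableOn (fun p : ℝ × ℝ => p.2 ^ r * g (p.1 - p.2)) (Ioc 0 t ×ˢ Ioc 0 t) := by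
    rw [IntegrableOn, Measure.volume_eq_prod]
    refine Integrable.mono' (g := fun p : ℝ × ℝ => M * p.2 ^ r) ?_ ?_ ?_
    · rw [← Measure.prod_restrict]
      exact (integrable_const M).mul_prod
        ((intervalIntegrable_iff_integrableOn_Ioc_of_le ht).mp (intervalIntegrable_rpow' hr))
    · exact ((measurable_snd.pow_const r).mul
        (hg.measurable.comp (measurable_fst.sub measurable_snd))).aestronglyMeasurable
    · filter_upwards [ae_restrict_mem (measurableSet_Ioc.prod measurableSet_Ioc)] with p hp
      rw [norm_mul, Real.norm_of_nonneg (Real.rpow_nonneg hp.2.1.le r), mul_comm]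
      refine mul_le_mul_of_nonneg_right (hM _ ⟨?_, ?_⟩) (Real.rpow_nonneg hp.2.1.le r)
      · linarith [hp.1.1, hp.2.2]
      · linarith [hp.1.2, hp.2.1]
  simp_rw [rlIntegral_eq_integral_rpow_mul_comp_sub]
  rw [intervalIntegral_triangle_swap ht (f := fun σ s => s ^ r * g (σ - s)) hint]
  refine integral_congr fun s _ => ?_
  simp only [intervalIntegral.integral_const_mul, integral_comp_sub_right, sub_self]

lemma continuousOn_intervalIntegral_of_continuousOn_Icc_prod {c d a b : ℝ} (hcd : c ≤ d)
    (hab : a ≤ b) {F : ℝ → ℝ → ℝ} (hF : ContinuousOn (Function.uncurry F) (Icc c d ×ˢ Icc a b)) :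
    ContinuousOn (fun t => ∫ γ in c..d, F γ t) (Icc a b) := by
  set G : ℝ → ℝ → ℝ := fun t γ => F (projIcc c d hcd γ) (projIcc a b hab t)
  have hproj : Continuous fun p : ℝ × ℝ =>
      ((projIcc c d hcd p.2 : ℝ), (projIcc a b hab p.1 : ℝ)) := by
    fun_prop
  have hG : Continuous (Function.uncurry G) :=
    hF.comp_continuous hproj fun p => ⟨(projIcc c d hcd p.2).2, (projIcc a b hab p.1).2⟩
  refine (continuous_parametric_intervalIntegral_of_continuous' hG c d).continuousOn.congr
    fun t ht => integral_congr fun γ hγ => ?_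
  rw [uIcc_of_le hcd] at hγ
  simp only [G, projIcc_of_mem hcd hγ, projIcc_of_mem hab ht]

lemma intervalIntegral_swap_of_continuousOn {c d a b : ℝ} {F : ℝ → ℝ → ℝ}
    (hF : ContinuousOn (Function.uncurry F) (uIcc c d ×ˢ uIcc a b)) :
    ∫ γ in c..d, ∫ σ in a..b, F γ σ = ∫ σ in a..b, ∫ γ in c..d, F γ σ :=
  intervalIntegral_intervalIntegral_swap <|
    (hF.integrableOn_compact (isCompact_uIcc.prod isCompact_uIcc)).mono_set
      (prod_mono uIoc_subset_uIcc uIoc_subset_uIcc)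

lemma ContinuousOn.hasDerivWithinAt_integral_Icc {f : ℝ → ℝ} {a b t : ℝ}
    (hf : ContinuousOn f (Icc a b)) (ht : t ∈ Icc a b) :
    HasDerivWithinAt (fun u => ∫ x in a..u, f x) (f t) (Icc a b) t :=
  have : Fact (t ∈ Icc a b) := ⟨ht⟩
  integral_hasDerivWithinAt_right
    ((hf.mono (uIcc_subset_Icc (left_mem_Icc.mpr (ht.1.trans ht.2)) ht)).intervalIntegrable)
    ⟨Icc a b, self_mem_nhdsWithin, hf.aestronglyMeasurable measurableSet_Icc⟩ (hf t ht)

lemma integral_eq_sub_of_hasDerivWithinAt_Icc {f f' : ℝ → ℝ} {a b x : ℝ}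
    (hf : ∀ t ∈ Icc a b, HasDerivWithinAt f (f' t) (Icc a b) t) (hf' : ContinuousOn f' (Icc a b))
    (hx : x ∈ Icc a b) :
    ∫ t in a..x, f' t = f x - f a := by
  have hsub : Icc a x ⊆ Icc a b := Icc_subset_Icc_right hx.2
  refine integral_eq_sub_of_hasDeriv_right_of_le hx.1
    (fun t ht => (hf t (hsub ht)).continuousWithinAt.mono hsub) (fun t ht => ?_)
    ((hf'.mono hsub).intervalIntegrable_of_Icc hx.1)
  exact ((hf t (hsub (Ioo_subset_Icc_self ht))).hasDerivAt
    (Icc_mem_nhds ht.1 (ht.2.trans_le hx.2))).hasDerivWithinAt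

section distJ

variable {c d : ℝ} {φ : ℝ → ℝ}

lemma distJ_congr {t : ℝ} (ht : 0 ≤ t) {f g : ℝ → ℝ} (h : EqOn f g (Icc 0 t)) :
    distJ c d φ f t = distJ c d φ g t :=
  integral_congr fun _ _ => congrArg (_ * ·) (rlIntegral_congr ht h)

lemma continuousOn_distJ_integrand (hd : d < 2) (hφ : ContinuousOn φ (Icc c d)) {a : ℝ}
    {f : ℝ → ℝ} (hf : ContinuousOn f (Icc 0 a)) :
    ContinuousOn (fun p : ℝ × ℝ => φ p.1 / Real.Gamma (2 - p.1) * rlIntegral (1 - p.1) f p.2)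
      (Icc c d ×ˢ Icc 0 a) := by
  have hΓ : ContinuousOn (fun γ => Real.Gamma (2 - γ)) (Icc c d) :=
    Real.differentiableOn_Gamma_Ioi.continuousOn.comp (continuousOn_const.sub continuousOn_id)
      fun γ hγ => show 0 < 2 - γ by linarith [hγ.2]
  have hweight : ContinuousOn (fun γ => φ γ / Real.Gamma (2 - γ)) (Icc c d) :=
    hφ.div hΓ fun γ hγ => (Real.Gamma_pos_of_pos (by linarith [hγ.2])).ne'
  refine (hweight.comp continuousOn_fst fun p hp => hp.1).mul
    ((continuousOn_rlIntegral hf).comp (f := fun p : ℝ × ℝ => (1 - p.1, p.2)) (by fun_prop)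
      fun p hp => ⟨show -1 < 1 - p.1 by linarith [hp.1.2], hp.2⟩)

lemma continuousOn_distJ (hcd : c ≤ d) (hd : d < 2) (hφ : ContinuousOn φ (Icc c d)) {a : ℝ}
    (ha : 0 ≤ a) {f : ℝ → ℝ} (hf : ContinuousOn f (Icc 0 a)) :
    ContinuousOn (distJ c d φ f) (Icc 0 a) :=
  continuousOn_intervalIntegral_of_continuousOn_Icc_prod hcd ha
    (continuousOn_distJ_integrand hd hφ hf)

lemma distJ_primitive (hcd : c ≤ d) (hd : d < 2) (hφ : ContinuousOn φ (Icc c d)) {g : ℝ → ℝ}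
    (hg : Continuous g) {t : ℝ} (ht : 0 ≤ t) :
    distJ c d φ (fun x => ∫ v in (0:ℝ)..x, g v) t = ∫ σ in (0:ℝ)..t, distJ c d φ g σ := by
  have hK := continuousOn_distJ_integrand hd hφ (hg.continuousOn (s := Icc 0 t))
  rw [← uIcc_of_le hcd, ← uIcc_of_le ht] at hK
  refine Eq.trans ?_ (intervalIntegral_swap_of_continuousOn
    (F := fun γ σ => φ γ / Real.Gamma (2 - γ) * rlIntegral (1 - γ) g σ) hK)
  refine integral_congr fun γ hγ => ?_
  rw [uIcc_of_le hcd] at hγ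
  rw [intervalIntegral.integral_const_mul, integral_rlIntegral (by linarith [hγ.2]) ht hg]
  rfl

end distJ

theorem distJ_deriv_general
    (a c d : ℝ) (ha : 0 < a) (hcd : c < d) (hd : d < 2)
    (φ : ℝ → ℝ) (hφ : ContinuousOn φ (Set.Icc c d))
    (y y' : ℝ → ℝ) (hy' : ContinuousOn y' (Set.Icc 0 a))
    (hy : ∀ t ∈ Set.Icc (0:ℝ) a, HasDerivWithinAt y (y' t) (Set.Icc 0 a) t)
    (hy0 : y 0 = 0) :
    ContinuousOn (distJ c d φ y') (Set.Icc 0 a) ∧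
    ∀ t ∈ Set.Icc (0:ℝ) a,
      HasDerivWithinAt (distJ c d φ y) (distJ c d φ y' t) (Set.Icc 0 a) t := by
  obtain ⟨g, hg, hgy'⟩ : ∃ g : ℝ → ℝ, Continuous g ∧ EqOn g y' (Icc 0 a) :=
    ⟨IccExtend ha.le ((Icc 0 a).domRestrict y'), hy'.domRestrict.Icc_extend',
      fun x hx => IccExtend_of_mem ha.le _ hx⟩
  have hy_eq : EqOn y (fun x => ∫ v in (0:ℝ)..x, g v) (Icc 0 a) := fun x hx => by
    show y x = ∫ v in (0:ℝ)..x, g v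
    rw [integral_congr fun v hv => hgy' (uIcc_subset_Icc (left_mem_Icc.mpr ha.le) hx hv),
      integral_eq_sub_of_hasDerivWithinAt_Icc hy hy' hx, hy0, sub_zero]
  have hprim : ∀ s ∈ Icc 0 a, distJ c d φ y s = ∫ σ in (0:ℝ)..s, distJ c d φ y' σ := by
    intro s hs
    have hsub : ∀ {σ}, σ ≤ s → Icc 0 σ ⊆ Icc 0 a := fun h => Icc_subset_Icc_right (h.trans hs.2)
    rw [distJ_congr hs.1 (hy_eq.mono (hsub le_rfl)), distJ_primitive hcd.le hd hφ hg hs.1]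
    refine integral_congr fun σ hσ => ?_
    rw [uIcc_of_le hs.1] at hσ
    exact distJ_congr hσ.1 (hgy'.mono (hsub hσ.2))
  have hJ' := continuousOn_distJ hcd.le hd hφ ha.le hy'
  exact ⟨hJ', fun t ht => (hJ'.hasDerivWithinAt_integral_Icc ht).congr hprim (hprim t ht)⟩

/-- if `y ∈ C¹([0,a])` with `y(0) = 0`, then `Jy` is `C¹` on
`[0,a]` with `(d/dt) Jy = Jy'`. -/
theorem distJ_deriv
    (a c d : ℝ) (ha : 0 < a) (hc : 0 ≤ c) (hcd : c < d) (hd : d < 2)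
    (φ : ℝ → ℝ) (hφ : ContinuousOn φ (Set.Icc c d))
    (y y' : ℝ → ℝ) (hy' : ContinuousOn y' (Set.Icc 0 a))
    (hy : ∀ t ∈ Set.Icc (0:ℝ) a, HasDerivWithinAt y (y' t) (Set.Icc 0 a) t)
    (hy0 : y 0 = 0) :
    ContinuousOn (distJ c d φ y') (Set.Icc 0 a) ∧
    ∀ t ∈ Set.Icc (0:ℝ) a,
      HasDerivWithinAt (distJ c d φ y) (distJ c d φ y' t) (Set.Icc 0 a) t :=
  distJ_deriv_general a c d ha hcd hd φ hφ y y' hy' hy hy0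
end
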